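/- Let v_0, ..., v_d ∈ R^d be vertices of a simplex whose interior contains the origin. Any colorful transversal S = {α_0 v_0 or negative multiples, ...} from the configuration C_i = {v_i, -v_i, ..., -(n_i-1)v_i} contains 0 in its convex hull if and only if S = {v_0,...,v_d} or S = {-α_0 v_0, ..., -α_d v_d} for integers 1 ≤ α_i < n_i. -/

import Mathlib

/-!
Let `c` be the barycentric coordinates of the origin with respect to the simplex `v`; they are
all positive. Every point of the transversal is a nonzero multiple `τ i • v i`. A convex
combination `∑ w i • τ i • v i = 0` is a linear dependence of the `v i` with coefficients
summing to `S = ∑ w i * τ i`, and by affine independence it must be `S • c`. As `c > 0` and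
`w ≥ 0`, every `τ i` has the sign of `S`; conversely, if all `τ i` share a sign, the weights
`c i / τ i` (up to sign and normalisation) exhibit the origin in the hull. The multiples
`τ i` are positive exactly for `v i` and negative exactly for `-α v i` with `α ≥ 1`.
-/

open Set Finset

theorem mem_convexHull_range_iff_exists_sum {ι E : Type*} [Fintype ι] [AddCommGroup E]
    [Module ℝ E] {g : ι → E} {x : E} :
    x ∈ convexHull ℝ (range g) ↔
      ∃ w : ι → ℝ, (∀ i, 0 ≤ w i) ∧ ∑ i, w i = 1 ∧ ∑ i, w i • g i = x := by
  classical
  rw [convexHull_range_eq_exists_affineCombination]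
  constructor
  · rintro ⟨s, w, hw0, hw1, rfl⟩
    have hsum : ∑ i, (s : Set ι).indicator w i = 1 := by
      rw [Finset.sum_indicator_subset w s.subset_univ, hw1]
    refine ⟨(s : Set ι).indicator w, fun i => Set.indicator_nonneg hw0 i, hsum, ?_⟩
    rw [Finset.affineCombination_indicator_subset w g s.subset_univ,
      Finset.affineCombination_eq_linear_combination _ _ _ hsum]
  · rintro ⟨w, hw0, hw1, rfl⟩
    exact ⟨univ, w, fun i _ => hw0 i, hw1,
      Finset.affineCombination_eq_linear_combination _ _ _ hw1⟩

section SignedMultiples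

variable {ι E : Type*} [Fintype ι] [AddCommGroup E] [Module ℝ E] {v : ι → E} {c τ : ι → ℝ}

theorem AffineIndependent.eq_sum_mul_of_sum_smul_eq_zero (hv : AffineIndependent ℝ v)
    (hc : ∑ i, c i = 1) (hcv : ∑ i, c i • v i = 0) {a : ι → ℝ} (ha : ∑ i, a i • v i = 0)
    (i : ι) : a i = (∑ j, a j) * c i := by
  have h := affineIndependent_iff.1 hv univ (fun j => a j - (∑ k, a k) * c j)
    (by rw [sum_sub_distrib, ← mul_sum, hc, mul_one, sub_self])
    (by simp only [sub_smul, mul_smul, sum_sub_distrib, ← smul_sum, ha, hcv, smul_zero,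
      sub_zero]) i (mem_univ i)
  exact sub_eq_zero.1 h

theorem AffineIndependent.pos_or_neg_of_zero_mem_convexHull_range_smul
    (hv : AffineIndependent ℝ v) (hc : ∑ i, c i = 1) (hcv : ∑ i, c i • v i = 0)
    (hcpos : ∀ i, 0 < c i) (hτ : ∀ i, τ i ≠ 0)
    (h : (0 : E) ∈ convexHull ℝ (range fun i => τ i • v i)) :
    (∀ i, 0 < τ i) ∨ ∀ i, τ i < 0 := by
  obtain ⟨w, hw0, hw1, hwτ⟩ := mem_convexHull_range_iff_exists_sum.1 h
  set S := ∑ j, w j * τ j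
  have key : ∀ i, w i * τ i = S * c i :=
    hv.eq_sum_mul_of_sum_smul_eq_zero hc hcv (by simpa only [mul_smul] using hwτ)
  have hS : S ≠ 0 := by
    intro hS
    have hw : ∀ i, w i = 0 := fun i =>
      (mul_eq_zero.1 ((key i).trans (by rw [hS, zero_mul]))).resolve_right (hτ i)
    simp [hw] at hw1
  rcases hS.lt_or_gt with hS | hS
  · exact Or.inr fun i =>
      neg_of_mul_neg_right (key i ▸ mul_neg_of_neg_of_pos hS (hcpos i)) (hw0 i)
  · exact Or.inl fun i => pos_of_mul_pos_right (key i ▸ mul_pos hS (hcpos i)) (hw0 i)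

theorem zero_mem_convexHull_range_smul_of_pos [Nonempty ι] (hcpos : ∀ i, 0 < c i)
    (hcv : ∑ i, c i • v i = 0) (hτ : ∀ i, 0 < τ i) :
    (0 : E) ∈ convexHull ℝ (range fun i => τ i • v i) := by
  have hw : ∀ i, 0 < c i / τ i := fun i => div_pos (hcpos i) (hτ i)
  have hmem := centerMass_mem_convexHull univ (fun i _ => (hw i).le)
    (sum_pos (fun i _ => hw i) univ_nonempty)
    (fun i _ => mem_range_self (f := fun i => τ i • v i) i)
  have hsum : ∑ i, (c i / τ i) • τ i • v i = 0 := by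
    simpa only [smul_smul, div_mul_cancel₀ _ (hτ _).ne'] using hcv
  rwa [centerMass, hsum, smul_zero] at hmem

theorem AffineIndependent.zero_mem_convexHull_range_smul_iff [Nonempty ι]
    (hv : AffineIndependent ℝ v) (hc : ∑ i, c i = 1) (hcv : ∑ i, c i • v i = 0)
    (hcpos : ∀ i, 0 < c i) (hτ : ∀ i, τ i ≠ 0) :
    (0 : E) ∈ convexHull ℝ (range fun i => τ i • v i) ↔ (∀ i, 0 < τ i) ∨ ∀ i, τ i < 0 := by
  refine ⟨hv.pos_or_neg_of_zero_mem_convexHull_range_smul hc hcv hcpos hτ, ?_⟩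
  rintro (hpos | hneg)
  · exact zero_mem_convexHull_range_smul_of_pos hcpos hcv hpos
  · have h := zero_mem_convexHull_range_smul_of_pos hcpos hcv (τ := fun i => -τ i)
      fun i => neg_pos.2 (hneg i)
    have hrange : (range fun i => -τ i • v i) = -range fun i => τ i • v i := by
      simp only [neg_smul, Set.neg_range]
    rwa [hrange, convexHull_neg, Set.mem_neg, neg_zero] at h

end SignedMultiples

theorem AffineIndependent.exists_pos_weights_of_zero_mem_interior_convexHull
    {ι E : Type*} [Fintype ι] [NormedAddCommGroup E] [NormedSpace ℝ E] {v : ι → E}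
    (hv : AffineIndependent ℝ v) (h0 : (0 : E) ∈ interior (convexHull ℝ (range v))) :
    ∃ c : ι → ℝ, (∀ i, 0 < c i) ∧ ∑ i, c i = 1 ∧ ∑ i, c i • v i = 0 := by
  let b : AffineBasis ι ℝ E := ⟨v, hv, affineSpan_eq_top_of_nonempty_interior ⟨0, h0⟩⟩
  have hpos : (0 : E) ∈ {x | ∀ i, 0 < b.coord i x} := b.interior_convexHull ▸ h0
  exact ⟨fun i => b.coord i 0, hpos, b.sum_coord_apply_eq_one 0,
    b.linear_combination_coord_eq_self 0⟩

theorem extremal_example_hitting_iff_general (d : ℕ) (v : Fin (d + 1) → EuclideanSpace ℝ (Fin d))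
    (hv : AffineIndependent ℝ v)
    (h0 : (0 : EuclideanSpace ℝ (Fin d)) ∈ interior (convexHull ℝ (Set.range v)))
    (n : Fin (d + 1) → ℕ)
    (pts : (i : Fin (d + 1)) → Fin (n i) → EuclideanSpace ℝ (Fin d))
    (hpts : ∀ i (j : Fin (n i)),
      pts i j = if (j : ℕ) = 0 then v i else (-(j : ℕ) : ℝ) • v i)
    (α : (i : Fin (d + 1)) → Fin (n i)) :
    (0 : EuclideanSpace ℝ (Fin d)) ∈ convexHull ℝ (Set.range fun i => pts i (α i)) ↔
      ((∀ i, (α i : ℕ) = 0) ∨ (∀ i, (α i : ℕ) ≠ 0)) := by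
  obtain ⟨c, hcpos, hc, hcv⟩ := hv.exists_pos_weights_of_zero_mem_interior_convexHull h0
  set τ : Fin (d + 1) → ℝ := fun i => if (α i : ℕ) = 0 then 1 else -((α i : ℕ) : ℝ)
  have hpts_eq : (fun i => pts i (α i)) = fun i => τ i • v i := by
    funext i
    rw [hpts]
    split_ifs <;> simp [τ, *]
  have hτ_pos : ∀ i, 0 < τ i ↔ (α i : ℕ) = 0 := fun i => by
    by_cases h : (α i : ℕ) = 0 <;> simp [τ, h]
  have hτ_neg : ∀ i, τ i < 0 ↔ (α i : ℕ) ≠ 0 := fun i => by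
    by_cases h : (α i : ℕ) = 0 <;> simp [τ, h, Nat.pos_of_ne_zero]
  have hτ : ∀ i, τ i ≠ 0 := fun i => by
    by_cases h : (α i : ℕ) = 0
    exacts [((hτ_pos i).2 h).ne', ((hτ_neg i).2 h).ne]
  rw [hpts_eq, hv.zero_mem_convexHull_range_smul_iff hc hcv hcpos hτ]
  simp only [hτ_pos, hτ_neg]

/-- Characterization of hitting transversals in the extremal example: a transversal
of `C i = {v i, -v i, …, -(n i - 1) v i}` contains the origin in its convex hull if
and only if it is `{v 0, …, v d}` or consists solely of negative multiples. -/
theorem extremal_example_hitting_iff (d : ℕ) (v : Fin (d + 1) → EuclideanSpace ℝ (Fin d))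
    (hv : AffineIndependent ℝ v)
    (h0 : (0 : EuclideanSpace ℝ (Fin d)) ∈ interior (convexHull ℝ (Set.range v)))
    (n : Fin (d + 1) → ℕ) (hn : ∀ i, 2 ≤ n i)
    (pts : (i : Fin (d + 1)) → Fin (n i) → EuclideanSpace ℝ (Fin d))
    (hpts : ∀ i (j : Fin (n i)),
      pts i j = if (j : ℕ) = 0 then v i else (-(j : ℕ) : ℝ) • v i)
    (α : (i : Fin (d + 1)) → Fin (n i)) :
    (0 : EuclideanSpace ℝ (Fin d)) ∈ convexHull ℝ (Set.range fun i => pts i (α i)) ↔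
      ((∀ i, (α i : ℕ) = 0) ∨ (∀ i, (α i : ℕ) ≠ 0)) :=
  extremal_example_hitting_iff_general d v hv h0 n pts hpts α
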